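/- The homogeneous quartic P₂(α₁, γ₁) = 5557α₁⁴ − 2994732α₁γ₁³ + 1054782α₁²γ₁² − 168492α₁³γ₁ + 6016437γ₁⁴ has, as a polynomial in h after the substitution γ₁ = hα₁ with α₁ ≠ 0, exactly two real roots h₁ and h₂, and both are positive. -/

import Mathlib

/-!
With `γ₁ = h α₁` the quartic factors as `P₂(α₁, h α₁) = α₁⁴ q(h)`, so for `α₁ ≠ 0` its zeros are
the roots of `q = turningQuartic`. Since `q(0) > 0`, `q(1/10) < 0` and `q(1) > 0`, the intermediate value theorem
gives a root in `(0, 1/10)` and one in `(1/10, 1)`. The second derivative of `q` is a quadratic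
with negative discriminant, so `q` is strictly convex and has no further root.
-/

open Set

theorem StrictConvexOn.lt_max_of_lt_of_lt {s : Set ℝ} {f : ℝ → ℝ} (hf : StrictConvexOn ℝ s f)
    {x y z : ℝ} (hx : x ∈ s) (hz : z ∈ s) (hxy : x < y) (hyz : y < z) :
    f y < max (f x) (f z) :=
  hf.lt_on_openSegment hx hz (hxy.trans hyz).ne <| by
    rw [openSegment_eq_Ioo (hxy.trans hyz)]
    exact ⟨hxy, hyz⟩

theorem StrictConvexOn.apply_eq_iff_of_apply_eq {s : Set ℝ} {f : ℝ → ℝ}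
    (hf : StrictConvexOn ℝ s f) {a b x c : ℝ} (ha : a ∈ s) (hb : b ∈ s) (hx : x ∈ s)
    (hab : a < b) (hfa : f a = c) (hfb : f b = c) :
    f x = c ↔ x = a ∨ x = b := by
  refine ⟨fun hfx => ?_, by rintro (rfl | rfl) <;> assumption⟩
  rcases lt_trichotomy x a with hxa | rfl | hax
  · have := hf.lt_max_of_lt_of_lt hx hb hxa hab
    simp_all
  · exact Or.inl rfl
  rcases lt_trichotomy x b with hxb | rfl | hbx
  · have := hf.lt_max_of_lt_of_lt ha hb hax hxb
    simp_all
  · exact Or.inr rfl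
  · have := hf.lt_max_of_lt_of_lt ha hx hab hbx
    simp_all

def turningQuartic (h : ℝ) : ℝ :=
  6016437 * h ^ 4 - 2994732 * h ^ 3 + 1054782 * h ^ 2 - 168492 * h + 5557

theorem continuous_turningQuartic : Continuous turningQuartic := by
  unfold turningQuartic
  fun_prop

theorem deriv_turningQuartic :
    deriv turningQuartic = fun x => 24065748 * x ^ 3 - 8984196 * x ^ 2 + 2109564 * x - 168492 := by
  ext x
  unfold turningQuartic
  simp (disch := fun_prop) only [deriv_fun_add, deriv_fun_sub, deriv_const_mul_field,
    deriv_pow_field, deriv_const_mul_id, deriv_const]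
  ring

theorem iterate_deriv_two_turningQuartic (x : ℝ) :
    deriv^[2] turningQuartic x = 72197244 * x ^ 2 - 17968392 * x + 2109564 := by
  simp only [Function.iterate_succ, Function.iterate_zero, Function.comp_apply, id,
    deriv_turningQuartic]
  simp (disch := fun_prop) only [deriv_fun_add, deriv_fun_sub, deriv_const_mul_field,
    deriv_pow_field, deriv_const_mul_id, deriv_const]
  ring

theorem strictConvexOn_turningQuartic : StrictConvexOn ℝ univ turningQuartic :=
  strictConvexOn_of_deriv2_pos' convex_univ continuous_turningQuartic.continuousOn
    fun x _ => by
      rw [iterate_deriv_two_turningQuartic]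
      nlinarith [sq_nonneg (144394488 * x - 17968392)]

theorem exists_turningQuartic_roots :
    ∃ h₁ h₂ : ℝ, 0 < h₁ ∧ h₁ < h₂ ∧ turningQuartic h₁ = 0 ∧ turningQuartic h₂ = 0 := by
  obtain ⟨h₁, ⟨h₁_pos, h₁_lt⟩, hq₁⟩ : (0 : ℝ) ∈ turningQuartic '' Ioo 0 (1 / 10) :=
    intermediate_value_Ioo' (by norm_num) continuous_turningQuartic.continuousOn
      (by norm_num [turningQuartic])
  obtain ⟨h₂, ⟨lt_h₂, -⟩, hq₂⟩ : (0 : ℝ) ∈ turningQuartic '' Ioo (1 / 10) 1 :=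
    intermediate_value_Ioo (by norm_num) continuous_turningQuartic.continuousOn
      (by norm_num [turningQuartic])
  exact ⟨h₁, h₂, h₁_pos, h₁_lt.trans lt_h₂, hq₁, hq₂⟩

/-- The homogeneous quartic P₂(α₁, γ₁) = 5557α₁⁴ − 2994732α₁γ₁³ + 1054782α₁²γ₁²
− 168492α₁³γ₁ + 6016437γ₁⁴, after substituting γ₁ = hα₁ with α₁ ≠ 0, has exactly
two real roots h₁, h₂ in h, both positive. -/
theorem stmt_13 (P₂ : ℝ → ℝ → ℝ)
    (hP₂ : P₂ = fun α₁ γ₁ => 5557 * α₁ ^ 4 - 2994732 * α₁ * γ₁ ^ 3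
      + 1054782 * α₁ ^ 2 * γ₁ ^ 2 - 168492 * α₁ ^ 3 * γ₁ + 6016437 * γ₁ ^ 4) :
    ∃ h₁ h₂ : ℝ, h₁ ≠ h₂ ∧ 0 < h₁ ∧ 0 < h₂ ∧
      ∀ α₁ : ℝ, α₁ ≠ 0 → ∀ h : ℝ, (P₂ α₁ (h * α₁) = 0 ↔ h = h₁ ∨ h = h₂) := by
  obtain ⟨h₁, h₂, h₁_pos, h₁_lt_h₂, hq₁, hq₂⟩ := exists_turningQuartic_roots
  refine ⟨h₁, h₂, h₁_lt_h₂.ne, h₁_pos, h₁_pos.trans h₁_lt_h₂, fun α₁ hα₁ h => ?_⟩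
  have hdehomogenize : P₂ α₁ (h * α₁) = α₁ ^ 4 * turningQuartic h := by
    subst hP₂
    unfold turningQuartic
    ring
  rw [hdehomogenize, mul_eq_zero, or_iff_right (pow_ne_zero 4 hα₁)]
  exact strictConvexOn_turningQuartic.apply_eq_iff_of_apply_eq (mem_univ _) (mem_univ _)
    (mem_univ h) h₁_lt_h₂ hq₁ hq₂
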